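/- Let p : ℝ^n → [1,∞) be measurable with p_+ < ∞ and suppose p(·) satisfies the A_∞ condition with parameter λ ∈ (0,1) and constant C₀. Then there exists C > 0 such that for every cube Q with ‖χ_Q‖_{p(·)} ≤ 1, setting p_{1−λ}(Q) := (p χ_Q)^*((1−λ)|Q|), one has ‖χ_Q‖_{p(·)}^{p_{1−λ}(Q)} ≤ C |Q|. -/

import Mathlib

open MeasureTheory ENNReal Set

noncomputable section

/-- An axis-parallel cube in `ℝⁿ`, given by its center and (positive) side length. -/
structure RCube (n : ℕ) where
  center : Fin n → ℝ
  side : ℝ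
  side_pos : 0 < side

namespace RCube

/-- The (closed) cube as a subset of `ℝⁿ`. -/
def toSet {n : ℕ} (Q : RCube n) : Set (Fin n → ℝ) :=
  {x | ∀ i, |x i - Q.center i| ≤ Q.side / 2}

/-- `rQ`: the cube concentric with `Q` whose side length is `r` times that of `Q`. -/
def scaledSet {n : ℕ} (Q : RCube n) (r : ℝ) : Set (Fin n → ℝ) :=
  {x | ∀ i, |x i - Q.center i| ≤ r * Q.side / 2}

end RCube

/-- A family of pairwise disjoint cubes. -/
def PairwiseDisjointCubes {n : ℕ} (F : Set (RCube n)) : Prop :=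
  F.Pairwise fun Q₁ Q₂ => Disjoint Q₁.toSet Q₂.toSet

/-- The variable Lebesgue norm `‖f‖_{p(·)}` for a real-valued (finite) exponent,
applied to an `ℝ≥0∞`-valued function: `inf {λ > 0 : ∫ (f/λ)^{p(x)} dx ≤ 1}`. -/
def vnorm {n : ℕ} (p : (Fin n → ℝ) → ℝ) (f : (Fin n → ℝ) → ℝ≥0∞) : ℝ≥0∞ :=
  sInf {lam : ℝ≥0∞ | 0 < lam ∧ (∫⁻ x, (f x / lam) ^ p x) ≤ 1}

/-- `t^e` for `t, e ∈ [0,∞]`, with the standard variable-exponent convention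
`t^∞ = 0` for `t ≤ 1` and `t^∞ = ∞` for `t > 1`. -/
def epow (t e : ℝ≥0∞) : ℝ≥0∞ :=
  if e = ∞ then (if t ≤ 1 then 0 else ∞) else t ^ e.toReal

/-- The variable Lebesgue norm for an exponent with values in `[1,∞]`. -/
def vnormE {n : ℕ} (p : (Fin n → ℝ) → ℝ≥0∞) (f : (Fin n → ℝ) → ℝ≥0∞) : ℝ≥0∞ :=
  sInf {lam : ℝ≥0∞ | 0 < lam ∧ (∫⁻ x, epow (f x / lam) (p x)) ≤ 1}

/-- `|f|` as an `ℝ≥0∞`-valued function. -/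
def ofR {n : ℕ} (f : (Fin n → ℝ) → ℝ) : (Fin n → ℝ) → ℝ≥0∞ :=
  fun x => ENNReal.ofReal |f x|

/-- The `ℝ≥0∞`-valued characteristic function of a set. -/
def chiE {n : ℕ} (S : Set (Fin n → ℝ)) : (Fin n → ℝ) → ℝ≥0∞ :=
  S.indicator fun _ => 1

/-- The Hardy--Littlewood maximal operator (over axis-parallel cubes containing `x`). -/
def hlMaximal {n : ℕ} (f : (Fin n → ℝ) → ℝ) (x : Fin n → ℝ) : ℝ≥0∞ :=
  ⨆ (Q : RCube n) (_ : x ∈ Q.toSet),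
    (∫⁻ y in Q.toSet, ENNReal.ofReal |f y|) / volume Q.toSet

/-- `M` is bounded on `L^{p(·)}`: there is `C > 0` with `‖Mf‖_{p(·)} ≤ C ‖f‖_{p(·)}`
for every `f ∈ L^{p(·)}`. -/
def MaximalBounded {n : ℕ} (p : (Fin n → ℝ) → ℝ) : Prop :=
  ∃ C > (0 : ℝ), ∀ f : (Fin n → ℝ) → ℝ, Measurable f → vnorm p (ofR f) < ∞ →
    vnorm p (hlMaximal f) ≤ ENNReal.ofReal C * vnorm p (ofR f)

/-- The function `∑_{Q ∈ F} t_Q χ_{E_Q}` (for a pairwise disjoint family,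
written as a pointwise supremum). -/
def cubeSum {n : ℕ} (F : Set (RCube n)) (t : RCube n → ℝ)
    (E : RCube n → Set (Fin n → ℝ)) (x : Fin n → ℝ) : ℝ≥0∞ :=
  ⨆ (Q : RCube n) (_ : Q ∈ F) (_ : x ∈ E Q), ENNReal.ofReal (t Q)

/-- `p(·)` satisfies the `A_∞` condition with parameter `lam` and constant `C`. -/
def AInftyWith {n : ℕ} (p : (Fin n → ℝ) → ℝ) (lam C : ℝ) : Prop :=
  ∀ F : Set (RCube n), PairwiseDisjointCubes F →
    ∀ t : RCube n → ℝ, (∀ Q ∈ F, 0 ≤ t Q) →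
      ∀ E : RCube n → Set (Fin n → ℝ),
        (∀ Q ∈ F, MeasurableSet (E Q) ∧ E Q ⊆ Q.toSet ∧
          ENNReal.ofReal lam * volume Q.toSet ≤ volume (E Q)) →
        vnorm p (cubeSum F t RCube.toSet) ≤ ENNReal.ofReal C * vnorm p (cubeSum F t E)

/-- The `A_∞` condition for a real-valued exponent. -/
def AInfty {n : ℕ} (p : (Fin n → ℝ) → ℝ) : Prop :=
  ∃ lam ∈ Ioo (0 : ℝ) 1, ∃ C > (0 : ℝ), AInftyWith p lam C

/-- `p(·)` satisfies the `A_∞` condition with parameter `lam` and constant `C`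
(exponent with values in `[1,∞]`). -/
def AInftyWithE {n : ℕ} (p : (Fin n → ℝ) → ℝ≥0∞) (lam C : ℝ) : Prop :=
  ∀ F : Set (RCube n), PairwiseDisjointCubes F →
    ∀ t : RCube n → ℝ, (∀ Q ∈ F, 0 ≤ t Q) →
      ∀ E : RCube n → Set (Fin n → ℝ),
        (∀ Q ∈ F, MeasurableSet (E Q) ∧ E Q ⊆ Q.toSet ∧
          ENNReal.ofReal lam * volume Q.toSet ≤ volume (E Q)) →
        vnormE p (cubeSum F t RCube.toSet) ≤ ENNReal.ofReal C * vnormE p (cubeSum F t E)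

/-- The `A_∞` condition for an exponent with values in `[1,∞]`. -/
def AInftyE {n : ℕ} (p : (Fin n → ℝ) → ℝ≥0∞) : Prop :=
  ∃ lam ∈ Ioo (0 : ℝ) 1, ∃ C > (0 : ℝ), AInftyWithE p lam C

/-- The nonincreasing-rearrangement value `(f χ_Q)^*(s) = inf {α : |{x ∈ Q : |f x| > α}| ≤ s}`. -/
def rearr {n : ℕ} (f : (Fin n → ℝ) → ℝ) (Q : RCube n) (s : ℝ≥0∞) : ℝ≥0∞ :=
  sInf {a : ℝ≥0∞ | volume {x | x ∈ Q.toSet ∧ a < ENNReal.ofReal |f x|} ≤ s}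

/-- The `λ`-median maximal operator `m_λ`. -/
def medianMax {n : ℕ} (lam : ℝ) (f : (Fin n → ℝ) → ℝ) (x : Fin n → ℝ) : ℝ≥0∞ :=
  ⨆ (Q : RCube n) (_ : x ∈ Q.toSet), rearr f Q (ENNReal.ofReal lam * volume Q.toSet)

/-- The modified median maximal operator `m_{τ,r}` (supremum over cubes `Q` with `x ∈ rQ`). -/
def medianMaxR {n : ℕ} (tau r : ℝ) (f : (Fin n → ℝ) → ℝ) (x : Fin n → ℝ) : ℝ≥0∞ :=
  ⨆ (Q : RCube n) (_ : x ∈ Q.scaledSet r), rearr f Q (ENNReal.ofReal tau * volume Q.toSet)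

/-- The average `⟨f⟩_Q = (1/|Q|) ∫_Q f`. -/
def cubeAvg {n : ℕ} (f : (Fin n → ℝ) → ℝ) (Q : RCube n) : ℝ :=
  (∫ y in Q.toSet, f y) / (volume Q.toSet).toReal

/-- `|T_F f|` for a pairwise disjoint family `F`, written as a pointwise supremum. -/
def avgSum {n : ℕ} (F : Set (RCube n)) (f : (Fin n → ℝ) → ℝ) (x : Fin n → ℝ) : ℝ≥0∞ :=
  ⨆ (Q : RCube n) (_ : Q ∈ F) (_ : x ∈ Q.toSet), ENNReal.ofReal |cubeAvg f Q|

/-- The reverse Hölder condition `RH`. -/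
def RHCond {n : ℕ} (p : (Fin n → ℝ) → ℝ) : Prop :=
  ∃ r : ℝ, 1 < r ∧ ∃ C : ℝ, 0 < C ∧
    ∀ S : Set (RCube n), PairwiseDisjointCubes S →
      ∀ t : RCube n → ℝ, (∀ Q ∈ S, 0 ≤ t Q) →
        (∑' Q : S, ∫⁻ x in Q.1.toSet, ENNReal.ofReal (t Q.1) ^ p x) ≤ 1 →
        (∑' Q : S, volume Q.1.toSet *
            ((∫⁻ x in Q.1.toSet, ENNReal.ofReal (t Q.1) ^ (r * p x)) / volume Q.1.toSet)
              ^ (1 / r)) ≤ ENNReal.ofReal C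

/-- The infimum defining `rearr` is attained: the distribution at level `rearr f Q s`
is at most `s`. -/
lemma rearr_spec {n : ℕ} (f : (Fin n → ℝ) → ℝ) (Q : RCube n) (s : ℝ≥0∞) :
    volume {x | x ∈ Q.toSet ∧ rearr f Q s < ENNReal.ofReal |f x|} ≤ s := by
  set g : (Fin n → ℝ) → ℝ≥0∞ := fun x => ENNReal.ofReal |f x| with hg
  set S := {a : ℝ≥0∞ | volume {x | x ∈ Q.toSet ∧ a < g x} ≤ s} with hS
  have hrearr : rearr f Q s = sInf S := rfl
  rw [hrearr]
  set a := sInf S with ha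
  have hupward : ∀ b, a < b → b ∈ S := by
    intro b hb
    obtain ⟨c, hcS, hcb⟩ := sInf_lt_iff.mp hb
    refine le_trans (measure_mono ?_) hcS
    intro x hx
    exact ⟨hx.1, lt_of_le_of_lt hcb.le hx.2⟩
  by_cases hatop : a = ∞
  · have hempty : {x | x ∈ Q.toSet ∧ a < g x} = ∅ := by
      ext x; simp [hatop, not_top_lt]
    rw [hempty]; simp
  · set A : ℕ → Set (Fin n → ℝ) := fun k => {x | x ∈ Q.toSet ∧ a + (k : ℝ≥0∞)⁻¹ < g x} with hA
    have hmono : Monotone A := by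
      intro k l hkl x hx
      exact ⟨hx.1, lt_of_le_of_lt
        (add_le_add le_rfl (ENNReal.inv_le_inv.mpr (Nat.cast_le.mpr hkl))) hx.2⟩
    have hsub : {x | x ∈ Q.toSet ∧ a < g x} ⊆ ⋃ k, A k := by
      intro x hx
      rcases eq_or_ne (g x) ∞ with hgx | hgx
      · refine Set.mem_iUnion.mpr ⟨1, hx.1, ?_⟩
        rw [hgx]
        exact Ne.lt_top (by simp [hatop])
      · have hpos : g x - a ≠ 0 := by
          rw [← pos_iff_ne_zero]
          exact tsub_pos_of_lt hx.2
        obtain ⟨k, hk⟩ := ENNReal.exists_inv_nat_lt hpos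
        refine Set.mem_iUnion.mpr ⟨k, hx.1, ?_⟩
        calc a + (k : ℝ≥0∞)⁻¹ < a + (g x - a) := ENNReal.add_lt_add_left hatop hk
        _ = g x := add_tsub_cancel_of_le hx.2.le
    calc volume {x | x ∈ Q.toSet ∧ a < g x} ≤ volume (⋃ k, A k) := measure_mono hsub
    _ = ⨆ k, volume (A k) := Directed.measure_iUnion hmono.directed_le
    _ ≤ s := iSup_le fun k => hupward _
        (ENNReal.lt_add_right hatop (by simp))

lemma vnorm_mono {n : ℕ} (p : (Fin n → ℝ) → ℝ) (hp : ∀ x, 0 ≤ p x)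
    {f g : (Fin n → ℝ) → ℝ≥0∞} (h : ∀ x, f x ≤ g x) : vnorm p f ≤ vnorm p g := by
  apply sInf_le_sInf
  rintro lam ⟨h0, hint⟩
  refine ⟨h0, le_trans (lintegral_mono fun x => ?_) hint⟩
  exact ENNReal.rpow_le_rpow (ENNReal.div_le_div_right (h x) _) (hp x)

lemma cubeSum_singleton {n : ℕ} (Q : RCube n) (E : RCube n → Set (Fin n → ℝ)) :
    cubeSum {Q} (fun _ => 1) E = chiE (E Q) := by
  funext x
  simp only [cubeSum, Set.mem_singleton_iff, iSup_iSup_eq_left]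
  by_cases hx : x ∈ E Q
  · simp [hx, chiE]
  · simp [hx, chiE]

lemma RCube.volume_toSet {n : ℕ} (Q : RCube n) :
    volume Q.toSet = ENNReal.ofReal Q.side ^ n := by
  have hset : Q.toSet =
      Set.univ.pi (fun i => Icc (Q.center i - Q.side / 2) (Q.center i + Q.side / 2)) := by
    ext x
    simp only [RCube.toSet, Set.mem_setOf_eq, Set.mem_pi, Set.mem_univ, forall_true_left,
      mem_Icc, abs_le]
    refine forall_congr' fun i => ?_
    constructor <;> intro h <;> constructor <;> linarith [h.1, h.2]
  rw [hset, volume_pi_pi]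
  simp only [Real.volume_Icc]
  have hterm : ∀ i : Fin n, ENNReal.ofReal (Q.center i + Q.side / 2 - (Q.center i - Q.side / 2))
      = ENNReal.ofReal Q.side := fun i => by congr 1; ring
  rw [Finset.prod_congr rfl fun i _ => hterm i, Finset.prod_const, Finset.card_univ,
    Fintype.card_fin]
lemma RCube.measurableSet_toSet {n : ℕ} (Q : RCube n) : MeasurableSet Q.toSet := by
  have : Q.toSet = ⋂ i, {x : Fin n → ℝ | |x i - Q.center i| ≤ Q.side / 2} := by
    ext x; simp [RCube.toSet]
  rw [this]
  exact MeasurableSet.iInter fun i =>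
    measurableSet_le (by fun_prop) measurable_const

theorem statement8 {n : ℕ} (p : (Fin n → ℝ) → ℝ) (hpm : Measurable p)
    (hp1 : ∀ x, 1 ≤ p x)
    (hup : ∃ B : ℝ, ∀ᵐ x ∂(volume : Measure (Fin n → ℝ)), p x ≤ B)
    (lam C₀ : ℝ) (hlam : lam ∈ Ioo (0 : ℝ) 1) (hC₀ : 0 < C₀)
    (hA : AInftyWith p lam C₀) :
    ∃ C : ℝ, 0 < C ∧ ∀ Q : RCube n, vnorm p (chiE Q.toSet) ≤ 1 →
      vnorm p (chiE Q.toSet) ^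
          (rearr p Q (ENNReal.ofReal (1 - lam) * volume Q.toSet)).toReal ≤
        ENNReal.ofReal C * volume Q.toSet := by
  obtain ⟨B, hB⟩ := hup
  set B' : ℝ := max B 1 with hB'
  have hK1 : (1 : ℝ) ≤ max C₀ 1 := le_max_right _ _
  refine ⟨(max C₀ 1) ^ B', by positivity, ?_⟩
  intro Q hQ1
  set V := volume Q.toSet with hV
  have hVpos : 0 < V := by
    rw [hV, Q.volume_toSet]
    exact ENNReal.pow_pos (ENNReal.ofReal_pos.mpr Q.side_pos) n
  have hVtop : V ≠ ∞ := by
    rw [hV, Q.volume_toSet]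
    exact ENNReal.pow_ne_top ENNReal.ofReal_ne_top
  set pr := rearr p Q (ENNReal.ofReal (1 - lam) * V) with hpr
  have habs : ∀ x, |p x| = p x := fun x => abs_of_nonneg (by linarith [hp1 x])
  -- pr ≥ 1
  have hpr1 : 1 ≤ pr := by
    refine le_sInf fun b hb => ?_
    by_contra hcon
    push_neg at hcon
    have hQb : {x | x ∈ Q.toSet ∧ b < ENNReal.ofReal |p x|} = Q.toSet := by
      ext x
      simp only [Set.mem_setOf_eq, and_iff_left_iff_imp]
      intro _
      refine lt_of_lt_of_le hcon ?_
      rw [habs x]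
      calc (1 : ℝ≥0∞) = ENNReal.ofReal 1 := by simp
      _ ≤ ENNReal.ofReal (p x) := ENNReal.ofReal_le_ofReal (hp1 x)
    rw [Set.mem_setOf_eq, hQb] at hb
    have hlt : ENNReal.ofReal (1 - lam) * V < 1 * V := by
      rw [mul_comm _ V, mul_comm 1 V]
      refine ENNReal.mul_lt_mul_right hVpos.ne' hVtop ?_
      exact ENNReal.ofReal_lt_one.mpr (by linarith [hlam.1])
    rw [one_mul] at hlt
    exact lt_irrefl V (lt_of_le_of_lt hb hlt)
  -- pr ≤ ofReal B'
  have hprB : pr ≤ ENNReal.ofReal B' := by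
    refine sInf_le ?_
    have hsub : {x | x ∈ Q.toSet ∧ ENNReal.ofReal B' < ENNReal.ofReal |p x|} ⊆
        {x | ¬ p x ≤ B} := by
      intro x hx
      simp only [Set.mem_setOf_eq]
      intro hle
      have : ENNReal.ofReal |p x| ≤ ENNReal.ofReal B' := by
        refine ENNReal.ofReal_le_ofReal ?_
        rw [habs x]
        exact le_trans hle (le_max_left _ _)
      exact absurd (lt_of_lt_of_le hx.2 this) (lt_irrefl _)
    have h0 : volume {x : Fin n → ℝ | ¬ p x ≤ B} = 0 := by
      rw [← MeasureTheory.ae_iff] at *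
      exact hB
    rw [Set.mem_setOf_eq]
    calc volume {x | x ∈ Q.toSet ∧ ENNReal.ofReal B' < ENNReal.ofReal |p x|}
        ≤ volume {x : Fin n → ℝ | ¬ p x ≤ B} := measure_mono hsub
    _ = 0 := h0
    _ ≤ ENNReal.ofReal (1 - lam) * V := zero_le
  have hprtop : pr ≠ ∞ := (lt_of_le_of_lt hprB ENNReal.ofReal_lt_top).ne
  set β := pr.toReal with hβ
  have hβ1 : 1 ≤ β := by
    rw [hβ, ← ENNReal.toReal_one]
    exact ENNReal.toReal_mono hprtop hpr1
  have hβ0 : 0 ≤ β := by linarith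
  have hβB : β ≤ B' := ENNReal.toReal_le_of_le_ofReal (le_trans zero_le_one (le_max_right B 1)) hprB
  -- the set E
  set E : Set (Fin n → ℝ) := Q.toSet ∩ {x | p x ≤ β} with hE
  have hEmeas : MeasurableSet E :=
    Q.measurableSet_toSet.inter (hpm measurableSet_Iic)
  have hEQ : E ⊆ Q.toSet := Set.inter_subset_left
  have hdiff : Q.toSet \ E ⊆ {x | x ∈ Q.toSet ∧ pr < ENNReal.ofReal |p x|} := by
    intro x hx
    have hxQ : x ∈ Q.toSet := hx.1
    have hxb : β < p x := by
      by_contra hc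
      push_neg at hc
      exact hx.2 ⟨hxQ, hc⟩
    refine ⟨hxQ, ?_⟩
    rw [habs x, ← ENNReal.ofReal_toReal hprtop, ← hβ]
    exact (ENNReal.ofReal_lt_ofReal_iff (by linarith [hp1 x])).mpr hxb
  have hEvol : ENNReal.ofReal lam * V ≤ volume E := by
    have h1 : volume (Q.toSet \ E) ≤ ENNReal.ofReal (1 - lam) * V :=
      le_trans (measure_mono hdiff) (rearr_spec p Q _)
    have h2 : V ≤ volume E + ENNReal.ofReal (1 - lam) * V := by
      calc V = volume (E ∪ Q.toSet \ E) := by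
            rw [Set.union_diff_cancel hEQ]
      _ ≤ volume E + volume (Q.toSet \ E) := measure_union_le _ _
      _ ≤ volume E + ENNReal.ofReal (1 - lam) * V := add_le_add le_rfl h1
    have h3 : ENNReal.ofReal lam * V + ENNReal.ofReal (1 - lam) * V = V := by
      rw [← add_mul, ← ENNReal.ofReal_add (by linarith [hlam.1]) (by linarith [hlam.2])]
      norm_num
    rw [← ENNReal.add_le_add_iff_right
      (show ENNReal.ofReal (1 - lam) * V ≠ ∞ from ENNReal.mul_ne_top ENNReal.ofReal_ne_top hVtop),
      h3]
    exact h2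
  -- A∞ application
  have hAQ : vnorm p (chiE Q.toSet) ≤ ENNReal.ofReal C₀ * vnorm p (chiE E) := by
    have := hA {Q} (Set.pairwise_singleton _ _) (fun _ => 1)
      (fun _ _ => zero_le_one) (fun _ => E) ?_
    · rwa [cubeSum_singleton, cubeSum_singleton] at this
    · intro Q' hQ'
      rw [Set.mem_singleton_iff] at hQ'
      subst hQ'
      exact ⟨hEmeas, hEQ, hEvol⟩
  set s := vnorm p (chiE E) with hs
  have hp0 : ∀ x, 0 ≤ p x := fun x => by linarith [hp1 x]
  have hst : s ≤ vnorm p (chiE Q.toSet) := by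
    refine vnorm_mono p hp0 fun x => ?_
    exact Set.indicator_le_indicator_of_subset hEQ (fun _ => zero_le_one) x
  have hs1 : s ≤ 1 := le_trans hst hQ1
  -- key estimate
  have key : ∀ lam' : ℝ≥0∞, 0 < lam' → lam' < s → lam' ^ β ≤ V := by
    intro lam' hl0 hls
    have hl1 : lam' ≤ 1 := le_trans hls.le hs1
    have hltop : lam' ≠ ∞ := (lt_of_le_of_lt hl1 ENNReal.one_lt_top).ne
    have hnotmem : lam' ∉ {l : ℝ≥0∞ | 0 < l ∧ (∫⁻ x, (chiE E x / l) ^ p x) ≤ 1} := by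
      intro hmem
      exact absurd (sInf_le hmem) (not_le.mpr hls)
    have hmod : 1 < ∫⁻ x, (chiE E x / lam') ^ p x := by
      by_contra hc
      push_neg at hc
      exact hnotmem ⟨hl0, hc⟩
    have hint_eq : (∫⁻ x, (chiE E x / lam') ^ p x) = ∫⁻ x in E, lam'⁻¹ ^ p x := by
      rw [← lintegral_indicator hEmeas]
      refine lintegral_congr fun x => ?_
      by_cases hx : x ∈ E
      · simp [chiE, Set.indicator_of_mem hx, one_div]
      · simp only [chiE, Set.indicator_of_notMem hx, ENNReal.zero_div]
        exact ENNReal.zero_rpow_of_pos (by linarith [hp1 x])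
    have hle2 : (∫⁻ x in E, lam'⁻¹ ^ p x) ≤ lam'⁻¹ ^ β * V := by
      calc (∫⁻ x in E, lam'⁻¹ ^ p x) ≤ ∫⁻ _ in E, lam'⁻¹ ^ β := by
            refine setLIntegral_mono' hEmeas fun x hx => ?_
            exact ENNReal.rpow_le_rpow_of_exponent_le (ENNReal.one_le_inv.mpr hl1) hx.2
      _ = lam'⁻¹ ^ β * volume E := setLIntegral_const _ _
      _ ≤ lam'⁻¹ ^ β * V := mul_le_mul_right (measure_mono hEQ) _
    have h4 : 1 < lam'⁻¹ ^ β * V := lt_of_lt_of_le (hint_eq ▸ hmod) hle2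
    calc lam' ^ β = lam' ^ β * 1 := (mul_one _).symm
    _ ≤ lam' ^ β * (lam'⁻¹ ^ β * V) := mul_le_mul_right h4.le _
    _ = (lam' * lam'⁻¹) ^ β * V := by
        rw [← mul_assoc, ← ENNReal.mul_rpow_of_nonneg _ _ hβ0]
    _ = V := by rw [ENNReal.mul_inv_cancel hl0.ne' hltop, ENNReal.one_rpow, one_mul]
  -- s ^ β ≤ V
  have hsV : s ^ β ≤ V := by
    have hβne : β ≠ 0 := by linarith
    have hsM : s ≤ V ^ (1 / β) := by
      by_contra hc
      push_neg at hc
      obtain ⟨lam', h1, h2⟩ := exists_between hc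
      have hl0 : 0 < lam' := lt_of_le_of_lt zero_le h1
      have hle : lam' ≤ V ^ (1 / β) := by
        have hkey := key lam' hl0 h2
        calc lam' = (lam' ^ β) ^ (1 / β) := by
              rw [← ENNReal.rpow_mul, mul_one_div, div_self hβne, ENNReal.rpow_one]
        _ ≤ V ^ (1 / β) := ENNReal.rpow_le_rpow hkey (by positivity)
      exact absurd hle (not_le.mpr h1)
    calc s ^ β ≤ (V ^ (1 / β)) ^ β := ENNReal.rpow_le_rpow hsM hβ0
    _ = V := by rw [← ENNReal.rpow_mul, one_div_mul_cancel hβne, ENNReal.rpow_one]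
  -- conclusion
  calc vnorm p (chiE Q.toSet) ^ β ≤ (ENNReal.ofReal C₀ * s) ^ β :=
        ENNReal.rpow_le_rpow hAQ hβ0
  _ = ENNReal.ofReal C₀ ^ β * s ^ β := ENNReal.mul_rpow_of_nonneg _ _ hβ0
  _ ≤ ENNReal.ofReal (max C₀ 1) ^ B' * V := by
      refine mul_le_mul' ?_ hsV
      calc ENNReal.ofReal C₀ ^ β ≤ ENNReal.ofReal (max C₀ 1) ^ β :=
            ENNReal.rpow_le_rpow (ENNReal.ofReal_le_ofReal (le_max_left _ _)) hβ0
      _ ≤ ENNReal.ofReal (max C₀ 1) ^ B' :=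
            ENNReal.rpow_le_rpow_of_exponent_le (ENNReal.one_le_ofReal.mpr hK1) hβB
  _ = ENNReal.ofReal ((max C₀ 1) ^ B') * V := by
      rw [ENNReal.ofReal_rpow_of_pos (by linarith)]
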